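/- arXiv:2303.10619 — 3 statements merged into one kernel-verified Lean document; each statement's English description precedes it below -/
import Mathlib

section
/- Under Assumption 1 with support bound h, every infinite sequential persuasion S = (Ξ_0, φ_1, Ξ_1, …) starting from μ can be represented by an h-branching sequential persuasion B = (C_n, π_n, β_n, η_n)_{n∈ℕ} starting from μ: for every n ∈ ℕ there exists a map r_n: C_n → Ξ_n such that (i) Pr[ξ] = Σ_{c∈C_n} 1[r_n(c) = ξ]·π_n(c) for every ξ ∈ Ξ_n; (ii) last(ξ) = β_n(c) and φ_{n+1}(ξ) = η_n(c) for every ξ ∈ Ξ_n and every c ∈ C_n with r_n(c) = ξ; (iii) for n ≤ n', ξ ∈ Ξ_n is a prefix of ξ' ∈ Ξ_{n'} if and only if for every c' ∈ C_{n'} with r_{n'}(c') = ξ' there exists c ∈ C_n with r_n(c) = ξ that is an ancestor of c'. -/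
open Filter Topology
open scoped Classical

noncomputable section

/-- Δ(Ω): beliefs, i.e. probability distributions on the finite state space Ω,
as a subspace of Ω → ℝ (its topology agrees with the total-variation one). -/
abbrev Belief (Ω : Type*) [Fintype Ω] :=
  {p : Ω → ℝ // (∀ ω, 0 ≤ p ω) ∧ ∑ ω, p ω = 1}

variable {Ω : Type*} [Fintype Ω]

/-- An element of F₀: a finite-support experiment, i.e. a finitely supported probability
distribution over beliefs (keys are the distinct posteriors p_j, values the positive
weights λ_j). -/
structure SPExp (Ω : Type*) [Fintype Ω] where
  w : Belief Ω →₀ ℝ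
  nonneg : ∀ p, 0 ≤ w p
  sum_one : ∑ p ∈ w.support, w p = 1

namespace SPExp

/-- τ(e): the support of an experiment. -/
def tau (e : SPExp Ω) : Finset (Belief Ω) := e.w.support

/-- Expectation of a real-valued function under an experiment. -/
def expect (e : SPExp Ω) (f : Belief Ω → ℝ) : ℝ := ∑ p ∈ e.w.support, e.w p * f p

/-- σ(e): the barycenter (expectation) of an experiment. -/
def sigma (e : SPExp Ω) : Belief Ω :=
  ⟨fun ω => ∑ p ∈ e.w.support, e.w p * p.val ω,
   fun ω => Finset.sum_nonneg fun p _ => mul_nonneg (e.nonneg p) (p.2.1 ω),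
   by
     calc ∑ ω, ∑ p ∈ e.w.support, e.w p * p.val ω
         = ∑ p ∈ e.w.support, ∑ ω, e.w p * p.val ω := Finset.sum_comm
       _ = ∑ p ∈ e.w.support, e.w p * ∑ ω, p.val ω := by
           refine Finset.sum_congr rfl fun p _ => ?_
           rw [Finset.mul_sum]
       _ = ∑ p ∈ e.w.support, e.w p := by
           refine Finset.sum_congr rfl fun p _ => ?_
           rw [p.2.2, mul_one]
       _ = 1 := e.sum_one⟩

/-- The trivial experiment (1, p). -/
def triv (p : Belief Ω) : SPExp Ω where
  w := Finsupp.single p 1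
  nonneg := fun q => by
    rw [Finsupp.single_apply]
    split <;> norm_num
  sum_one := by
    rw [Finsupp.support_single_ne_zero _ one_ne_zero]
    simp

end SPExp

/-- T: the set of trivial experiments. -/
def Trivials (Ω : Type*) [Fintype Ω] : Set (SPExp Ω) := Set.range SPExp.triv

/-- Weak convergence of experiments, viewed as Borel probability measures on Δ(Ω). -/
def WeakTendsto (es : ℕ → SPExp Ω) (e : SPExp Ω) : Prop :=
  ∀ f : Belief Ω → ℝ, Continuous f →
    Tendsto (fun i => (es i).expect f) atTop (𝓝 (e.expect f))

/-- Convergence of beliefs in total variation. -/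
def TVTendsto (ps : ℕ → Belief Ω) (p : Belief Ω) : Prop :=
  Tendsto (fun i => ∑ ω, |(ps i).val ω - p.val ω|) atTop (𝓝 0)

/-- Histories, most recent step first: entries are (experiment taken, realized posterior);
the starting belief is kept separately. -/
abbrev Hist (Ω : Type*) [Fintype Ω] := List (SPExp Ω × Belief Ω)

/-- last(ξ): the current belief after history ξ started at μ. -/
def lastBelief (μ : Belief Ω) : Hist Ω → Belief Ω
  | [] => μ
  | (_, p) :: _ => p

/-- Pr[ξ]: the probability of a history. -/
def histProb : Hist Ω → ℝ
  | [] => 1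
  | (e, p) :: ξ => e.w p * histProb ξ

/-- A sequential persuasion starting from μ with feasible experiments F, given by its
history-dependent choice of the next (feasible, Bayes-plausible) experiment.  An n-step
sequential persuasion is such a strategy used for n steps; an infinite sequential
persuasion is the strategy itself. -/
structure SeqP {Ω : Type*} [Fintype Ω] (F : Set (SPExp Ω)) (μ : Belief Ω) where
  next : Hist Ω → SPExp Ω
  feasible : ∀ ξ, next ξ ∈ F
  bayes : ∀ ξ, (next ξ).sigma = lastBelief μ ξ

variable {F : Set (SPExp Ω)} {μ : Belief Ω}

/-- Expectation of g over the n-step histories of S extending ξ. -/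
def histExp (S : SeqP F μ) (g : Hist Ω → ℝ) : ℕ → Hist Ω → ℝ
  | 0, ξ => g ξ
  | n + 1, ξ => (S.next ξ).expect fun p => histExp S g n ((S.next ξ, p) :: ξ)

/-- Ξ_n: the set of n-step histories of S. -/
def Hists (S : SeqP F μ) : ℕ → Set (Hist Ω)
  | 0 => {[]}
  | n + 1 => {ξ' | ∃ ξ ∈ Hists S n, ∃ p ∈ (S.next ξ).tau, ξ' = (S.next ξ, p) :: ξ}

/-- ξ padded by l trivial steps. -/
def padHist (μ : Belief Ω) (ξ : Hist Ω) (l : ℕ) : Hist Ω :=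
  List.replicate l (SPExp.triv (lastBelief μ ξ), lastBelief μ ξ) ++ ξ

/-- S terminates after ξ: all subsequent choices (along trivial continuations of ξ)
are the trivial experiment. -/
def TerminatesAfter (S : SeqP F μ) (ξ : Hist Ω) : Prop :=
  ∀ l : ℕ, S.next (padHist μ ξ l) = SPExp.triv (lastBelief μ ξ)

/-- 𝒱(S⁽ⁿ⁾) = E[v(b_n)], the expected utility of the n-step persuasion given by the
first n steps of S. -/
def stepUtility (v : Belief Ω → ℝ) (S : SeqP F μ) (n : ℕ) : ℝ :=
  histExp S (fun ξ => v (lastBelief μ ξ)) n []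

/-- Pr[S terminates after n steps]. -/
def termProb (S : SeqP F μ) (n : ℕ) : ℝ :=
  histExp S (fun ξ => if TerminatesAfter S ξ then 1 else 0) n []

/-- 𝒱(S) for an infinite sequential persuasion S. -/
def infUtility (v : Belief Ω → ℝ) (S : SeqP F μ) : ℝ :=
  ⨆ n : ℕ, histExp S (fun ξ => if TerminatesAfter S ξ then v (lastBelief μ ξ) else 0) n []

/-- Pr[b_n ∈ O] for the belief b_n induced by S after n steps. -/
def massIn (S : SeqP F μ) (O : Set (Belief Ω)) (n : ℕ) : ℝ :=
  histExp S (fun ξ => if lastBelief μ ξ ∈ O then 1 else 0) n []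

/-- v_n(p): the optimal value over n-step sequential persuasions starting from p. -/
def vN (F : Set (SPExp Ω)) (v : Belief Ω → ℝ) (n : ℕ) (p : Belief Ω) : ℝ :=
  ⨆ S : SeqP F p, stepUtility v S n

/-- v_∞(p): the optimal value over infinite sequential persuasions starting from p. -/
def vInf (F : Set (SPExp Ω)) (v : Belief Ω → ℝ) (p : Belief Ω) : ℝ :=
  ⨆ S : SeqP F p, infUtility v S

/-- Assumption 1: a uniform support bound h, and weak closedness of F. -/
def Assumption1 (F : Set (SPExp Ω)) (h : ℕ) : Prop :=
  (∀ e ∈ F, e.tau.card ≤ h) ∧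
  ∀ es : ℕ → SPExp Ω, (∀ i, es i ∈ F) → ∀ e : SPExp Ω, WeakTendsto es e → e ∈ F

/-- Shannon entropy of a belief. -/
def entropy (p : Belief Ω) : ℝ := -∑ ω, p.val ω * Real.log (p.val ω)

/-- Assumption 2: every nontrivial feasible experiment lowers expected entropy by δ. -/
def Assumption2 (F : Set (SPExp Ω)) (δ : ℝ) : Prop :=
  ∀ e ∈ F \ Trivials Ω, e.expect entropy ≤ entropy e.sigma - δ

/-- S is (effectively) an n-step sequential persuasion: after n steps it only takes
trivial experiments. -/
def IsNStep (S : SeqP F μ) (n : ℕ) : Prop :=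
  ∀ ξ : Hist Ω, n ≤ ξ.length → S.next ξ = SPExp.triv (lastBelief μ ξ)

/-- Assumption 3 at prior μ: a sequence of finite-step sequential persuasions whose
values tend to v_∞(μ) and which terminate at a uniform rate. -/
def Assumption3 (F : Set (SPExp Ω)) (v : Belief Ω → ℝ) (μ : Belief Ω) : Prop :=
  ∃ (nk : ℕ → ℕ) (Sk : ℕ → SeqP F μ),
    (∀ k, IsNStep (Sk k) (nk k)) ∧
    Tendsto (fun k => stepUtility v (Sk k) (nk k)) atTop (𝓝 (vInf F v μ)) ∧
    ∀ ε : ℝ, 0 < ε → ∃ N : ℕ, ∀ k, N ≤ nk k → 1 - ε ≤ termProb (Sk k) N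

/-- v̂: the concave closure of v (the value of unconstrained Bayesian persuasion). -/
def concaveClosure (v : Belief Ω → ℝ) (p : Belief Ω) : ℝ :=
  sSup {x : ℝ | ∃ e : SPExp Ω, e.sigma = p ∧ x = e.expect v}

/-- O is implementable for (μ, F). -/
def Implementable (F : Set (SPExp Ω)) (μ : Belief Ω) (O : Set (Belief Ω)) : Prop :=
  ∀ ε : ℝ, 0 < ε → ∃ (n : ℕ) (S : SeqP F μ), 1 - ε < massIn S O n

/-- S is a Markov sequential persuasion compatible with (μ, D, Z, ρ). -/
def MarkovCompatible (S : SeqP F μ) (D Z : Set (Belief Ω)) (ρ : Belief Ω → SPExp Ω) : Prop :=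
  ∀ ξ : Hist Ω,
    (lastBelief μ ξ ∈ D → S.next ξ = ρ (lastBelief μ ξ)) ∧
    (lastBelief μ ξ ∈ Z → S.next ξ = SPExp.triv (lastBelief μ ξ))

/-- The j-th child of vertex m at depth n of the infinite h-ary tree. -/
def treeChild {h n : ℕ} (m : Fin (h ^ n)) (j : Fin h) : Fin (h ^ (n + 1)) :=
  ⟨m.val * h + j.val, by
    have h1 : m.val + 1 ≤ h ^ n := m.isLt
    have h2 : j.val < h := j.isLt
    calc m.val * h + j.val < m.val * h + h := by omega
      _ = (m.val + 1) * h := by ring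
      _ ≤ h ^ n * h := Nat.mul_le_mul h1 le_rfl
      _ = h ^ (n + 1) := (pow_succ h n).symm⟩

/-- An h-branching sequential persuasion starting from μ. -/
structure HBranch (Ω : Type*) [Fintype Ω] (F : Set (SPExp Ω)) (h : ℕ) (μ : Belief Ω) where
  π : ∀ n : ℕ, Fin (h ^ n) → ℝ
  β : ∀ n : ℕ, Fin (h ^ n) → Belief Ω
  η : ∀ n : ℕ, Fin (h ^ n) → SPExp Ω
  π_nonneg : ∀ n m, 0 ≤ π n m
  π_sum : ∀ n : ℕ, ∑ m, π n m = 1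
  η_mem : ∀ n m, η n m ∈ F
  β_root : ∀ m, β 0 m = μ
  compat_sigma : ∀ n m, (η n m).sigma = β n m
  compat_tau : ∀ (n : ℕ) (m : Fin (h ^ n)), ∀ p ∈ (η n m).tau,
    ∃ j : Fin h, β (n + 1) (treeChild m j) = p
  consistent : ∀ (n : ℕ) (m : Fin (h ^ n)) (p : Belief Ω),
    (∑ j : Fin h, if β (n + 1) (treeChild m j) = p then π (n + 1) (treeChild m j) else 0)
      = π n m * (η n m).w p

/-- c' (at depth n + l) is a descendant of c (at depth n) in the h-ary tree. -/
def Descendant {h : ℕ} : {n : ℕ} → (l : ℕ) → Fin (h ^ n) → Fin (h ^ (n + l)) → Prop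
  | _, 0, c, c' => c = c'
  | _, l + 1, c, c' => ∃ c'' j, Descendant l c c'' ∧ c' = treeChild c'' j

namespace HBranch

variable {h : ℕ}

/-- B terminates after vertex m at depth n. -/
def TermAfter (B : HBranch Ω F h μ) (n : ℕ) (m : Fin (h ^ n)) : Prop :=
  B.η n m ∈ Trivials Ω ∧
  ∀ (l : ℕ) (c' : Fin (h ^ (n + l))), Descendant l m c' → 0 < B.π (n + l) c' →
    B.η (n + l) c' ∈ Trivials Ω

/-- Pr[B terminates after n steps]. -/
def termProb (B : HBranch Ω F h μ) (n : ℕ) : ℝ :=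
  ∑ m : Fin (h ^ n), if B.TermAfter n m then B.π n m else 0

end HBranch

/-- B represents the infinite sequential persuasion S (via maps r_n : C_n → Ξ_n). -/
def Represents (S : SeqP F μ) {h : ℕ} (B : HBranch Ω F h μ) : Prop :=
  ∃ r : ∀ n : ℕ, Fin (h ^ n) → Hist Ω,
    ∀ n : ℕ,
      (∀ c, r n c ∈ Hists S n) ∧
      (∀ ξ ∈ Hists S n, histProb ξ = ∑ c, if r n c = ξ then B.π n c else 0) ∧
      (∀ c, lastBelief μ (r n c) = B.β n c ∧ S.next (r n c) = B.η n c) ∧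
      (∀ l : ℕ, ∀ ξ ∈ Hists S n, ∀ ξ' ∈ Hists S (n + l),
        (ξ <:+ ξ' ↔
          ∀ c' : Fin (h ^ (n + l)), r (n + l) c' = ξ' →
            ∃ c : Fin (h ^ n), r n c = ξ ∧ Descendant l c c'))

/-- The number of nontrivial experiments taken along a history. -/
def nontrivCount (ξ : Hist Ω) : ℕ :=
  ξ.countP fun s => decide (s.1 ∉ Trivials Ω)

end

/-!
A feasible experiment has at most `h` posteriors, so the children of a history
can be laid out on the `h` children of a tree vertex, one child per posterior and the surplus
children carrying probability zero. Recursively, every vertex of the `h`-ary tree is labelled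
by a history of `S` together with its probability; the map from vertices to histories is onto
every `Ξ_n`, the probabilities of the vertices above a history add up to its probability, and
the ancestor relation of the tree reflects the prefix relation of histories, because two
suffixes of the same length of one history coincide.
-/

noncomputable section

variable {Ω : Type*} [Fintype Ω]

namespace SPExp

theorem tau_nonempty (e : SPExp Ω) : e.tau.Nonempty :=
  Finset.nonempty_of_sum_ne_zero (e.sum_one.trans_ne one_ne_zero)

theorem tau_card_pos (e : SPExp Ω) : 0 < e.tau.card :=
  Finset.card_pos.2 e.tau_nonempty

/-- Children beyond the last posterior repeat it (with weight zero, see `childWeight`), so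
that every child of a tree vertex still labels a genuine history. -/
def childPosterior (e : SPExp Ω) (j : ℕ) : Belief Ω :=
  (e.tau.equivFin.symm ⟨min j (e.tau.card - 1), by have := e.tau_card_pos; omega⟩).1

def childWeight (e : SPExp Ω) (j : ℕ) : ℝ :=
  if j < e.tau.card then e.w (e.childPosterior j) else 0

theorem childPosterior_mem (e : SPExp Ω) (j : ℕ) : e.childPosterior j ∈ e.tau :=
  (e.tau.equivFin.symm _).2

theorem childPosterior_of_lt (e : SPExp Ω) {j : ℕ} (hj : j < e.tau.card) :
    e.childPosterior j = (e.tau.equivFin.symm ⟨j, hj⟩).1 := by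
  simp only [childPosterior, show min j (e.tau.card - 1) = j by omega]

theorem childPosterior_equivFin (e : SPExp Ω) {p : Belief Ω} (hp : p ∈ e.tau) :
    e.childPosterior (e.tau.equivFin ⟨p, hp⟩) = p := by
  rw [childPosterior_of_lt _ (e.tau.equivFin ⟨p, hp⟩).isLt, Fin.eta, Equiv.symm_apply_apply]

theorem exists_childPosterior_eq (e : SPExp Ω) {h : ℕ} (hh : e.tau.card ≤ h) {p : Belief Ω}
    (hp : p ∈ e.tau) : ∃ j : Fin h, e.childPosterior j = p :=
  ⟨⟨e.tau.equivFin ⟨p, hp⟩, (Fin.isLt _).trans_le hh⟩, e.childPosterior_equivFin hp⟩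

theorem childWeight_nonneg (e : SPExp Ω) (j : ℕ) : 0 ≤ e.childWeight j := by
  unfold childWeight
  split_ifs
  exacts [e.nonneg _, le_rfl]

theorem sum_childWeight_of_childPosterior_eq (e : SPExp Ω) {h : ℕ} (hh : e.tau.card ≤ h)
    (p : Belief Ω) :
    ∑ j : Fin h, (if e.childPosterior j = p then e.childWeight j else 0) = e.w p := by
  by_cases hp : p ∈ e.tau
  · set i := e.tau.equivFin ⟨p, hp⟩
    have hi : (i : ℕ) < h := i.isLt.trans_le hh
    rw [Finset.sum_eq_single_of_mem ⟨i, hi⟩ (Finset.mem_univ _)]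
    · simp [childWeight, i, childPosterior_equivFin]
    · intro j _ hji
      unfold childWeight
      split_ifs with hpost hj
      · rw [childPosterior_of_lt _ hj] at hpost
        have hji' : (⟨j, hj⟩ : Fin e.tau.card) = i :=
          (Equiv.symm_apply_eq _).1 (Subtype.ext hpost)
        have hji_val : (j : ℕ) = i := congrArg Fin.val hji'
        exact (hji (Fin.ext hji_val)).elim
      all_goals rfl
  · rw [Finsupp.notMem_support_iff.1 hp]
    refine Finset.sum_eq_zero fun j _ => if_neg ?_
    rintro rfl
    exact hp (e.childPosterior_mem j)

theorem sum_childWeight (e : SPExp Ω) {h : ℕ} (hh : e.tau.card ≤ h) :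
    ∑ j : Fin h, e.childWeight j = 1 := by
  calc ∑ j : Fin h, e.childWeight j
      = ∑ j : Fin h, ∑ p ∈ e.tau, if e.childPosterior j = p then e.childWeight j else 0 :=
        Finset.sum_congr rfl fun j _ => by rw [Finset.sum_ite_eq, if_pos (e.childPosterior_mem j)]
    _ = ∑ p ∈ e.tau, e.w p := by
        rw [Finset.sum_comm]
        exact Finset.sum_congr rfl fun p _ => e.sum_childWeight_of_childPosterior_eq hh p
    _ = 1 := e.sum_one

end SPExp

def treeChildEquiv (h n : ℕ) : Fin (h ^ n) × Fin h ≃ Fin (h ^ (n + 1)) :=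
  finProdFinEquiv.trans (finCongr (pow_succ h n).symm)

section Tree

variable {h n : ℕ}

theorem treeChildEquiv_apply (m : Fin (h ^ n)) (j : Fin h) :
    treeChildEquiv h n (m, j) = treeChild m j :=
  Fin.ext (by simp [treeChildEquiv, treeChild, finProdFinEquiv, add_comm, mul_comm])

def treeParent (c : Fin (h ^ (n + 1))) : Fin (h ^ n) := ((treeChildEquiv h n).symm c).1

def treeChildIndex (c : Fin (h ^ (n + 1))) : Fin h := ((treeChildEquiv h n).symm c).2

theorem treeChild_treeParent (c : Fin (h ^ (n + 1))) :
    treeChild (treeParent c) (treeChildIndex c) = c := by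
  rw [← treeChildEquiv_apply]
  exact (treeChildEquiv h n).apply_symm_apply c

@[simp]
theorem treeParent_treeChild (m : Fin (h ^ n)) (j : Fin h) : treeParent (treeChild m j) = m := by
  simp [treeParent, ← treeChildEquiv_apply]

@[simp]
theorem treeChildIndex_treeChild (m : Fin (h ^ n)) (j : Fin h) :
    treeChildIndex (treeChild m j) = j := by
  simp [treeChildIndex, ← treeChildEquiv_apply]

theorem sum_fin_pow_succ {M : Type*} [AddCommMonoid M] (f : Fin (h ^ (n + 1)) → M) :
    ∑ c, f c = ∑ m : Fin (h ^ n), ∑ j : Fin h, f (treeChild m j) := by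
  rw [← (treeChildEquiv h n).sum_comp, Fintype.sum_prod_type]
  simp only [treeChildEquiv_apply]

theorem sum_fin_pow_zero {M : Type*} [AddCommMonoid M] (f : Fin (h ^ 0) → M) :
    ∑ c, f c = f ⟨0, by simp⟩ :=
  Fintype.sum_eq_single _ fun c hc => absurd (Fin.ext (by simpa using c.isLt)) hc

def treeAncestor : (l : ℕ) → Fin (h ^ (n + l)) → Fin (h ^ n)
  | 0, c => c
  | l + 1, c => treeAncestor l (treeParent c)

theorem descendant_treeAncestor : ∀ (l : ℕ) (c : Fin (h ^ (n + l))),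
    Descendant l (treeAncestor l c) c
  | 0, _ => rfl
  | l + 1, c =>
    ⟨treeParent c, treeChildIndex c, descendant_treeAncestor l _, (treeChild_treeParent c).symm⟩

end Tree

namespace SeqP

variable {F : Set (SPExp Ω)} {μ : Belief Ω} (S : SeqP F μ) (h : ℕ)

theorem length_eq_of_mem_hists : ∀ {n : ℕ} {ξ : Hist Ω}, ξ ∈ Hists S n → ξ.length = n
  | 0, _, rfl => rfl
  | _ + 1, _, ⟨_, hξ, _, _, rfl⟩ => congrArg (· + 1) (length_eq_of_mem_hists hξ)

def treeHist : (n : ℕ) → Fin (h ^ n) → Hist Ω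
  | 0, _ => []
  | n + 1, c =>
    (S.next (treeHist n (treeParent c)),
      (S.next (treeHist n (treeParent c))).childPosterior (treeChildIndex c)) ::
      treeHist n (treeParent c)

def treeProb : (n : ℕ) → Fin (h ^ n) → ℝ
  | 0, _ => 1
  | n + 1, c =>
    treeProb n (treeParent c) *
      (S.next (S.treeHist h n (treeParent c))).childWeight (treeChildIndex c)

variable {h}

@[simp]
theorem treeHist_treeChild {n : ℕ} (m : Fin (h ^ n)) (j : Fin h) :
    S.treeHist h (n + 1) (treeChild m j) =
      (S.next (S.treeHist h n m), (S.next (S.treeHist h n m)).childPosterior j) ::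
        S.treeHist h n m := by
  simp [treeHist]

@[simp]
theorem treeProb_treeChild {n : ℕ} (m : Fin (h ^ n)) (j : Fin h) :
    S.treeProb h (n + 1) (treeChild m j) =
      S.treeProb h n m * (S.next (S.treeHist h n m)).childWeight j := by
  simp [treeProb]

theorem treeHist_mem_hists : ∀ (n : ℕ) (c : Fin (h ^ n)), S.treeHist h n c ∈ Hists S n
  | 0, _ => rfl
  | n + 1, c =>
    ⟨_, treeHist_mem_hists n (treeParent c), _, SPExp.childPosterior_mem _ _, rfl⟩

theorem treeProb_nonneg : ∀ (n : ℕ) (c : Fin (h ^ n)), 0 ≤ S.treeProb h n c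
  | 0, _ => zero_le_one
  | n + 1, _ => mul_nonneg (treeProb_nonneg n _) (SPExp.childWeight_nonneg _ _)

theorem exists_treeHist_eq (hh : ∀ e ∈ F, e.tau.card ≤ h) :
    ∀ {n : ℕ} {ξ : Hist Ω}, ξ ∈ Hists S n → ∃ c : Fin (h ^ n), S.treeHist h n c = ξ
  | 0, _, rfl => ⟨⟨0, by simp⟩, rfl⟩
  | _ + 1, _, ⟨ξ, hξ, p, hp, rfl⟩ => by
    obtain ⟨c, rfl⟩ := exists_treeHist_eq hh hξ
    obtain ⟨j, hj⟩ := SPExp.exists_childPosterior_eq _ (hh _ (S.feasible _)) hp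
    exact ⟨treeChild c j, by rw [treeHist_treeChild, hj]⟩

theorem treeHist_suffix_of_descendant {n : ℕ} :
    ∀ {l : ℕ} {c : Fin (h ^ n)} {c' : Fin (h ^ (n + l))}, Descendant l c c' →
      S.treeHist h n c <:+ S.treeHist h (n + l) c'
  | 0, _, _, rfl => List.suffix_refl _
  | _ + 1, _, _, ⟨_, _, hd, rfl⟩ =>
    (treeHist_suffix_of_descendant hd).trans <| by
      show _ <:+ S.treeHist h (n + _ + 1) _
      rw [treeHist_treeChild]
      exact List.suffix_cons _ _

theorem treeHist_suffix_iff (hh : ∀ e ∈ F, e.tau.card ≤ h) {n l : ℕ} {ξ ξ' : Hist Ω}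
    (hξ : ξ ∈ Hists S n) (hξ' : ξ' ∈ Hists S (n + l)) :
    ξ <:+ ξ' ↔ ∀ c' : Fin (h ^ (n + l)), S.treeHist h (n + l) c' = ξ' →
      ∃ c : Fin (h ^ n), S.treeHist h n c = ξ ∧ Descendant l c c' := by
  constructor
  · rintro hsuf c' rfl
    refine ⟨treeAncestor l c', ?_, descendant_treeAncestor l c'⟩
    have hanc := S.treeHist_suffix_of_descendant (descendant_treeAncestor l c')
    refine (List.suffix_of_suffix_length_le hanc hsuf ?_).eq_of_length ?_ <;>
      rw [S.length_eq_of_mem_hists hξ, S.length_eq_of_mem_hists (S.treeHist_mem_hists n _)]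
  · intro hdesc
    obtain ⟨c', rfl⟩ := S.exists_treeHist_eq hh hξ'
    obtain ⟨c, rfl, hd⟩ := hdesc c' rfl
    exact S.treeHist_suffix_of_descendant hd

variable (hh : ∀ e ∈ F, e.tau.card ≤ h)
include hh

theorem sum_treeProb_of_childPosterior_eq {n : ℕ} (m : Fin (h ^ n)) (p : Belief Ω) :
    ∑ j : Fin h, (if (S.next (S.treeHist h n m)).childPosterior j = p
        then S.treeProb h (n + 1) (treeChild m j) else 0) =
      S.treeProb h n m * (S.next (S.treeHist h n m)).w p := by
  simp_rw [treeProb_treeChild, ← mul_ite_zero, ← Finset.mul_sum,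
    SPExp.sum_childWeight_of_childPosterior_eq _ (hh _ (S.feasible _))]

theorem sum_treeProb : ∀ n : ℕ, ∑ c : Fin (h ^ n), S.treeProb h n c = 1
  | 0 => sum_fin_pow_zero _
  | n + 1 => by
    simp_rw [sum_fin_pow_succ, treeProb_treeChild, ← Finset.mul_sum,
      SPExp.sum_childWeight _ (hh _ (S.feasible _)), mul_one]
    exact sum_treeProb n

theorem histProb_eq_sum_treeProb : ∀ {n : ℕ} {ξ : Hist Ω}, ξ ∈ Hists S n →
    histProb ξ = ∑ c : Fin (h ^ n), if S.treeHist h n c = ξ then S.treeProb h n c else 0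
  | 0, _, rfl => by
    rw [sum_fin_pow_zero]
    exact (if_pos rfl).symm
  | n + 1, _, ⟨ξ, hξ, p, _, rfl⟩ => by
    have children : ∀ m : Fin (h ^ n),
        (∑ j : Fin h, if S.treeHist h (n + 1) (treeChild m j) = (S.next ξ, p) :: ξ
          then S.treeProb h (n + 1) (treeChild m j) else 0) =
        S.treeProb h n m * if S.treeHist h n m = ξ then (S.next ξ).w p else 0 := by
      intro m
      split_ifs with hm
      · subst hm
        rw [← S.sum_treeProb_of_childPosterior_eq hh]
        simp
      · refine (Finset.sum_eq_zero fun j _ => if_neg ?_).trans (mul_zero _).symm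
        rw [treeHist_treeChild]
        exact fun heq => hm (List.cons_eq_cons.1 heq).2
    rw [sum_fin_pow_succ, Finset.sum_congr rfl fun m _ => children m,
      histProb, histProb_eq_sum_treeProb hξ, Finset.mul_sum]
    refine Finset.sum_congr rfl fun m _ => ?_
    split_ifs <;> ring

def toHBranch : HBranch Ω F h μ where
  π := S.treeProb h
  β n c := lastBelief μ (S.treeHist h n c)
  η n c := S.next (S.treeHist h n c)
  π_nonneg := S.treeProb_nonneg
  π_sum := S.sum_treeProb hh
  η_mem _ _ := S.feasible _
  β_root _ := rfl
  compat_sigma _ _ := S.bayes _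
  compat_tau _ _ _ hp := by
    simpa [lastBelief] using SPExp.exists_childPosterior_eq _ (hh _ (S.feasible _)) hp
  consistent n m p := by
    simpa [lastBelief] using S.sum_treeProb_of_childPosterior_eq hh m p

theorem represents_toHBranch : Represents S (S.toHBranch hh) :=
  ⟨S.treeHist h, fun n =>
    ⟨S.treeHist_mem_hists n, fun _ => S.histProb_eq_sum_treeProb hh, fun _ => ⟨rfl, rfl⟩,
      fun _ _ hξ _ hξ' => S.treeHist_suffix_iff hh hξ hξ'⟩⟩

end SeqP

end

theorem lem_branch_represent_general {Ω : Type*} [Fintype Ω]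
    (F : Set (SPExp Ω))
    (h : ℕ) (hA1 : Assumption1 F h)
    (μ : Belief Ω) (S : SeqP F μ) :
    ∃ B : HBranch Ω F h μ, Represents S B :=
  ⟨S.toHBranch hA1.1, S.represents_toHBranch hA1.1⟩

/-- Lemma 8 (lem-branch-represent): under Assumption 1, every infinite sequential
persuasion is represented by an h-branching sequential persuasion. -/
theorem lem_branch_represent {Ω : Type*} [Fintype Ω] [Nonempty Ω]
    (F : Set (SPExp Ω)) (hTF : Trivials Ω ⊆ F)
    (h : ℕ) (hA1 : Assumption1 F h)
    (μ : Belief Ω) (S : SeqP F μ) :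
    ∃ B : HBranch Ω F h μ, Represents S B :=
  lem_branch_represent_general F h hA1 μ S
end

section
/- Fix n ∈ ℕ and suppose Assumption 1 holds with support bound h. Let (B_k)_{k≥1} be a sequence of h-branching sequential persuasions starting from μ, B_k = (C_i, π_i^{(k)}, β_i^{(k)}, η_i^{(k)})_{i∈ℕ}, such that for every 0 ≤ i ≤ n−1, (η_i^{(k)})_{k≥1} pointwise weakly converges to some η_i: C_i → F, and for every 0 ≤ i ≤ n, (π_i^{(k)})_{k≥1} pointwise converges to some distribution π_i over C_i and (β_i^{(k)})_{k≥1} pointwise converges in total variation to some β_i: C_i → Δ(Ω). Then there exist a subsequence indexed by (k_l)_{l≥1}, a map η_n: C_n → F, a probability distribution π_{n+1} over C_{n+1}, and a map β_{n+1}: C_{n+1} → Δ(Ω) such that: (η_n^{(k_l)})_{l≥1} pointwise weakly converges to η_n; (π_{n+1}^{(k_l)})_{l≥1} pointwise converges to π_{n+1}; (β_{n+1}^{(k_l)})_{l≥1} pointwise converges in total variation to β_{n+1}; σ(η_n(c_{n,m})) = β_n(c_{n,m}) and τ(η_n(c_{n,m})) ⊆ {β_{n+1}(c) : c ∈ Γ(n,m)}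 for every 1 ≤ m ≤ h^n; and for every p assigned probability λ ≥ 0 by η_n(c_{n,m}), Σ_{c∈Γ(n,m)} 1[β_{n+1}(c) = p]·π_{n+1}(c) = π_n(c_{n,m})·λ. -/
open Filter Topology
open scoped Classical

/-!
By compactness of the simplices, a subsequence makes `π_{n+1}`, `β_{n+1}` and the weights that
`η_n(c)` puts on the children of `c` converge simultaneously. The limit experiment `η_n(c)` puts
the limit weights on the limit children: expectations under it are finite sums, so weak
convergence is immediate, feasibility is the weak closedness of `F`, and Bayes plausibility is
the limit of `σ(η_n^{(k)}(c)) = β_n^{(k)}(c)`. The consistency identity is equivalent to its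
integrated form against all continuous test functions, which passes to the limit.
-/

noncomputable section

variable {Ω : Type*} [Fintype Ω]

instance Belief.compactSpace : CompactSpace (Belief Ω) :=
  inferInstanceAs (CompactSpace (stdSimplex ℝ Ω))

theorem tvTendsto_iff_tendsto {ps : ℕ → Belief Ω} {p : Belief Ω} :
    TVTendsto ps p ↔ Tendsto ps atTop (𝓝 p) := by
  rw [TVTendsto, tendsto_subtype_rng, tendsto_pi_nhds]
  constructor
  · intro htv ω
    rw [tendsto_iff_dist_tendsto_zero]
    refine squeeze_zero (fun _ => dist_nonneg) (fun k => ?_) htv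
    rw [Real.dist_eq]
    exact Finset.single_le_sum (f := fun ω => |(ps k).val ω - p.val ω|)
      (fun _ _ => abs_nonneg _) (Finset.mem_univ ω)
  · intro hps
    simpa using tendsto_finsetSum Finset.univ fun ω _ => ((hps ω).sub_const (p.val ω)).abs

theorem exists_continuous_eq_one_eq_zero {X : Type*} [TopologicalSpace X] [T1Space X]
    [NormalSpace X] (s : Finset X) (p : X) :
    ∃ f : X → ℝ, Continuous f ∧ f p = 1 ∧ ∀ x ∈ s, x ≠ p → f x = 0 := by
  obtain ⟨f, hf0, hf1, -⟩ := exists_continuous_zero_one_of_isClosed (s.erase p).isClosed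
    isClosed_singleton (Set.disjoint_singleton_right.2 (Finset.notMem_erase p s))
  exact ⟨f, f.continuous, hf1 rfl, fun x hx hxp => hf0 (Finset.mem_erase.2 ⟨hxp, hx⟩)⟩

theorem Finsupp.sum_sum_single_mul {α ι : Type*} (s : Finset ι) (q : ι → α) (a : ι → ℝ)
    (f : α → ℝ) :
    (∑ j ∈ s, Finsupp.single (q j) (a j)).sum (fun p x => x * f p) = ∑ j ∈ s, a j * f (q j) := by
  rw [← Finsupp.sum_finsetSum_index (fun _ => zero_mul _) (fun _ _ _ => add_mul _ _ _)]
  exact Finset.sum_congr rfl fun j _ => Finsupp.sum_single_index (zero_mul _)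

theorem Finsupp.sum_single_div_card {α ι : Type*} [Fintype ι] [DecidableEq α] (w : α →₀ ℝ)
    (q : ι → α) (hq : ∀ p ∈ w.support, ∃ j, q j = p) :
    ∑ j, Finsupp.single (q j) (w (q j) / (Finset.univ.filter fun j' => q j' = q j).card) = w := by
  ext p
  rw [Finsupp.finsetSum_apply]
  simp only [Finsupp.single_apply]
  rw [← Finset.sum_filter, Finset.sum_congr rfl fun j hj => by rw [(Finset.mem_filter.1 hj).2],
    Finset.sum_const, nsmul_eq_mul]
  by_cases hp : ∃ j, q j = p
  · obtain ⟨j, hj⟩ := hp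
    have hcard : ((Finset.univ.filter fun j' => q j' = p).card : ℝ) ≠ 0 :=
      Nat.cast_ne_zero.2 (Finset.card_ne_zero.2 ⟨j, by simpa using hj⟩)
    field_simp
  · have hw : w p = 0 := Finsupp.notMem_support_iff.1 fun hmem => hp (hq p hmem)
    simp [hw]

theorem WeakTendsto.tendsto_sigma {es : ℕ → SPExp Ω} {e : SPExp Ω} (he : WeakTendsto es e) :
    Tendsto (fun k => (es k).sigma) atTop (𝓝 e.sigma) :=
  tendsto_subtype_rng.2 <| tendsto_pi_nhds.2 fun ω =>
    he _ ((continuous_apply ω).comp continuous_subtype_val)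

namespace SPExp

def ofWeights {ι : Type*} [Fintype ι] (q : ι → Belief Ω) (a : Belief ι) : SPExp Ω where
  w := ∑ j, Finsupp.single (q j) (a.val j)
  nonneg p := by
    rw [Finsupp.finsetSum_apply]
    exact Finset.sum_nonneg fun j _ => by
      rw [Finsupp.single_apply]
      split_ifs
      exacts [a.2.1 j, le_rfl]
  sum_one := by
    have hsum := Finsupp.sum_sum_single_mul Finset.univ q a.val fun _ => 1
    simp only [mul_one] at hsum
    exact hsum.trans a.2.2

section ofWeights

variable {ι : Type*} [Fintype ι]

theorem expect_ofWeights (q : ι → Belief Ω) (a : Belief ι) (f : Belief Ω → ℝ) :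
    (ofWeights q a).expect f = ∑ j, a.val j * f (q j) :=
  Finsupp.sum_sum_single_mul _ q a.val f

theorem exists_eq_of_mem_tau_ofWeights {q : ι → Belief Ω} {a : Belief ι} {p : Belief Ω}
    (hp : p ∈ (ofWeights q a).tau) : ∃ j, q j = p := by
  obtain ⟨j, -, hj⟩ := Finset.exists_ne_zero_of_sum_ne_zero
    ((Finsupp.finsetSum_apply _ _ p).symm.trans_ne (Finsupp.mem_support_iff.1 hp))
  exact ⟨j, by_contra fun hne => hj (Finsupp.single_eq_of_ne (Ne.symm hne))⟩

/-- Weights `a` with `ofWeights q a = e`: the mass of each posterior is split evenly among the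
indices `j` that reach it. -/
def splitWeights (e : SPExp Ω) (q : ι → Belief Ω) (hq : ∀ p ∈ e.tau, ∃ j, q j = p) :
    Belief ι :=
  ⟨fun j => e.w (q j) / (Finset.univ.filter fun j' => q j' = q j).card,
    fun j => div_nonneg (e.nonneg _) (Nat.cast_nonneg _),
    by
      have hsum := Finsupp.sum_sum_single_mul Finset.univ q
        (fun j => e.w (q j) / (Finset.univ.filter fun j' => q j' = q j).card) fun _ => 1
      rw [Finsupp.sum_single_div_card e.w q hq] at hsum
      simp only [mul_one] at hsum
      exact hsum.symm.trans e.sum_one⟩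

theorem ofWeights_splitWeights (e : SPExp Ω) (q : ι → Belief Ω)
    (hq : ∀ p ∈ e.tau, ∃ j, q j = p) : ofWeights q (e.splitWeights q hq) = e := by
  obtain ⟨w, _, _⟩ := e
  simp only [ofWeights, splitWeights, mk.injEq]
  exact Finsupp.sum_single_div_card w q hq

theorem weakTendsto_ofWeights {q : ℕ → ι → Belief Ω} {a : ℕ → Belief ι} {q' : ι → Belief Ω}
    {a' : Belief ι} (hq : Tendsto q atTop (𝓝 q')) (ha : Tendsto a atTop (𝓝 a')) :
    WeakTendsto (fun k => ofWeights (q k) (a k)) (ofWeights q' a') := by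
  intro f hf
  simp only [expect_ofWeights]
  exact tendsto_finsetSum _ fun j _ =>
    (tendsto_pi_nhds.1 (tendsto_subtype_rng.1 ha) j).mul
      ((hf.tendsto _).comp (tendsto_pi_nhds.1 hq j))

end ofWeights

/-- The reverse direction tests against a bump function at `p`. -/
theorem forall_sum_ite_eq_iff {ι : Type*} [Fintype ι] (e : SPExp Ω) (q : ι → Belief Ω)
    (hq : ∀ p ∈ e.tau, ∃ j, q j = p) (c : ι → ℝ) (r : ℝ) :
    (∀ p, ∑ j, (if q j = p then c j else 0) = r * e.w p) ↔
      ∀ f, Continuous f → ∑ j, f (q j) * c j = r * e.expect f := by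
  constructor
  · intro hsplit f _
    have hmaps : ∀ j ∈ Finset.univ, q j ∈ Finset.univ.image q :=
      fun j _ => Finset.mem_image_of_mem q (Finset.mem_univ j)
    have hsupp : e.w.support ⊆ Finset.univ.image q := fun p hp => by
      obtain ⟨j, hj⟩ := hq p hp
      exact hj ▸ Finset.mem_image_of_mem q (Finset.mem_univ j)
    calc ∑ j, f (q j) * c j
        = ∑ p ∈ Finset.univ.image q, f p * ∑ j, (if q j = p then c j else 0) := by
          rw [← Finset.sum_fiberwise_of_maps_to hmaps]
          refine Finset.sum_congr rfl fun p _ => ?_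
          rw [← Finset.sum_filter, Finset.mul_sum]
          exact Finset.sum_congr rfl fun j hj => by rw [(Finset.mem_filter.1 hj).2]
      _ = r * ∑ p ∈ Finset.univ.image q, e.w p * f p := by
          simp only [hsplit, Finset.mul_sum]
          exact Finset.sum_congr rfl fun _ _ => by ring
      _ = r * e.expect f := by
          rw [expect, Finset.sum_subset hsupp fun p _ hp => by
            rw [Finsupp.notMem_support_iff.1 hp, zero_mul]]
  · intro htest p
    obtain ⟨f, hf, hfp, hf0⟩ := exists_continuous_eq_one_eq_zero (Finset.univ.image q ∪ e.tau) p
    have hfq : ∀ j, f (q j) * c j = if q j = p then c j else 0 := fun j => by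
      split_ifs with hj
      · rw [hj, hfp, one_mul]
      · rw [hf0 _ (Finset.mem_union_left _ (Finset.mem_image_of_mem q (Finset.mem_univ j))) hj,
          zero_mul]
    have hexp : e.expect f = e.w p := by
      rw [expect, Finset.sum_eq_single p (fun x hx hxp => by
        rw [hf0 x (Finset.mem_union_right _ hx) hxp, mul_zero]) (fun hp => by
        rw [Finsupp.notMem_support_iff.1 hp, zero_mul]), hfp, mul_one]
    rw [← hexp, ← htest f hf]
    exact (Finset.sum_congr rfl fun j _ => hfq j).symm

end SPExp

namespace HBranch

variable {F : Set (SPExp Ω)} {h : ℕ} {μ : Belief Ω} (B : HBranch Ω F h μ)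

def piBelief (n : ℕ) : Belief (Fin (h ^ n)) := ⟨B.π n, B.π_nonneg n, B.π_sum n⟩

def childWeights (n : ℕ) (m : Fin (h ^ n)) : Belief (Fin h) :=
  (B.η n m).splitWeights (fun j => B.β (n + 1) (treeChild m j)) (B.compat_tau n m)

theorem ofWeights_childWeights (n : ℕ) (m : Fin (h ^ n)) :
    SPExp.ofWeights (fun j => B.β (n + 1) (treeChild m j)) (B.childWeights n m) = B.η n m :=
  SPExp.ofWeights_splitWeights _ _ _

theorem sum_children_mul_pi (n : ℕ) (m : Fin (h ^ n)) {f : Belief Ω → ℝ} (hf : Continuous f) :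
    ∑ j, f (B.β (n + 1) (treeChild m j)) * B.π (n + 1) (treeChild m j)
      = B.π n m * (B.η n m).expect f :=
  ((B.η n m).forall_sum_ite_eq_iff _ (B.compat_tau n m) _ _).1 (B.consistent n m) f hf

end HBranch

end

theorem lem_step_converge_general {Ω : Type*} [Fintype Ω]
    (F : Set (SPExp Ω))
    (h : ℕ) (hA1 : Assumption1 F h) (μ : Belief Ω) (n : ℕ)
    (B : ℕ → HBranch Ω F h μ)
    (πlim : ∀ i : ℕ, Fin (h ^ i) → ℝ)
    (βlim : ∀ i : ℕ, Fin (h ^ i) → Belief Ω)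
    (hπ : ∀ i ≤ n, ∀ m,
      Filter.Tendsto (fun k => (B k).π i m) Filter.atTop (nhds (πlim i m)))
    (hβ : ∀ i ≤ n, ∀ m, TVTendsto (fun k => (B k).β i m) (βlim i m)) :
    ∃ φ : ℕ → ℕ, StrictMono φ ∧
    ∃ (ηn : Fin (h ^ n) → SPExp Ω) (πn1 : Fin (h ^ (n + 1)) → ℝ)
      (βn1 : Fin (h ^ (n + 1)) → Belief Ω),
      (∀ m, ηn m ∈ F) ∧
      (∀ m, WeakTendsto (fun l => (B (φ l)).η n m) (ηn m)) ∧
      (∀ c, Filter.Tendsto (fun l => (B (φ l)).π (n + 1) c) Filter.atTop (nhds (πn1 c))) ∧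
      (∀ c, 0 ≤ πn1 c) ∧ (∑ c, πn1 c = 1) ∧
      (∀ c, TVTendsto (fun l => (B (φ l)).β (n + 1) c) (βn1 c)) ∧
      (∀ m, SPExp.sigma (ηn m) = βlim n m) ∧
      (∀ m, ∀ p ∈ SPExp.tau (ηn m), ∃ j : Fin h, βn1 (treeChild m j) = p) ∧
      (∀ (m : Fin (h ^ n)) (p : Belief Ω),
        (∑ j : Fin h, if βn1 (treeChild m j) = p then πn1 (treeChild m j) else 0)
          = πlim n m * (ηn m).w p) := by
  obtain ⟨⟨πn1, βn1, a⟩, φ, hφ, hlim⟩ := CompactSpace.tendsto_subseq fun k =>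
    ((B k).piBelief (n + 1), (B k).β (n + 1), (B k).childWeights n)
  have hπn1 : Tendsto (fun l => (B (φ l)).π (n + 1)) atTop (𝓝 πn1.val) :=
    tendsto_subtype_rng.1 hlim.fst_nhds
  have hβn1 : Tendsto (fun l => (B (φ l)).β (n + 1)) atTop (𝓝 βn1) := hlim.snd_nhds.fst_nhds
  have ha : Tendsto (fun l => (B (φ l)).childWeights n) atTop (𝓝 a) := hlim.snd_nhds.snd_nhds
  have hq (m : Fin (h ^ n)) : Tendsto (fun l j => (B (φ l)).β (n + 1) (treeChild m j)) atTop
      (𝓝 fun j => βn1 (treeChild m j)) :=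
    tendsto_pi_nhds.2 fun j => tendsto_pi_nhds.1 hβn1 _
  let ηn m := SPExp.ofWeights (fun j => βn1 (treeChild m j)) (a m)
  have hweak (m : Fin (h ^ n)) : WeakTendsto (fun l => (B (φ l)).η n m) (ηn m) := by
    simpa only [HBranch.ofWeights_childWeights] using
      SPExp.weakTendsto_ofWeights (hq m) (tendsto_pi_nhds.1 ha m)
  have hπn (m : Fin (h ^ n)) := (hπ n le_rfl m).comp hφ.tendsto_atTop
  have hβn (m : Fin (h ^ n)) := (tvTendsto_iff_tendsto.1 (hβ n le_rfl m)).comp hφ.tendsto_atTop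
  have htau (m : Fin (h ^ n)) : ∀ p ∈ (ηn m).tau, ∃ j, βn1 (treeChild m j) = p :=
    fun _ => SPExp.exists_eq_of_mem_tau_ofWeights
  have hsigma (m : Fin (h ^ n)) : (ηn m).sigma = βlim n m :=
    tendsto_nhds_unique ((hweak m).tendsto_sigma.congr fun l => (B (φ l)).compat_sigma n m)
      (hβn m)
  have htest (m : Fin (h ^ n)) (f : Belief Ω → ℝ) (hf : Continuous f) :
      ∑ j, f (βn1 (treeChild m j)) * πn1.val (treeChild m j) = πlim n m * (ηn m).expect f :=
    tendsto_nhds_unique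
      (tendsto_finsetSum _ fun j _ =>
        ((hf.tendsto _).comp (tendsto_pi_nhds.1 hβn1 _)).mul (tendsto_pi_nhds.1 hπn1 _))
      (((hπn m).mul (hweak m f hf)).congr fun l => ((B (φ l)).sum_children_mul_pi n m hf).symm)
  exact ⟨φ, hφ, ηn, πn1.val, βn1, fun m => hA1.2 _ (fun l => (B (φ l)).η_mem n m) _ (hweak m),
    hweak, tendsto_pi_nhds.1 hπn1, πn1.2.1, πn1.2.2,
    fun c => tvTendsto_iff_tendsto.2 (tendsto_pi_nhds.1 hβn1 c), hsigma, htau,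
    fun m => ((ηn m).forall_sum_ite_eq_iff _ (htau m) _ _).2 (htest m)⟩

/-- Lemma 10 (lem-step-converge): one-step extension of the convergence of a sequence of
h-branching sequential persuasions, along a subsequence. -/
theorem lem_step_converge {Ω : Type*} [Fintype Ω] [Nonempty Ω]
    (F : Set (SPExp Ω)) (hTF : Trivials Ω ⊆ F)
    (h : ℕ) (hA1 : Assumption1 F h) (μ : Belief Ω) (n : ℕ)
    (B : ℕ → HBranch Ω F h μ)
    (ηlim : ∀ i : ℕ, Fin (h ^ i) → SPExp Ω)
    (πlim : ∀ i : ℕ, Fin (h ^ i) → ℝ)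
    (βlim : ∀ i : ℕ, Fin (h ^ i) → Belief Ω)
    (hη : ∀ i < n, ∀ m, ηlim i m ∈ F ∧ WeakTendsto (fun k => (B k).η i m) (ηlim i m))
    (hπ : ∀ i ≤ n, ∀ m,
      Filter.Tendsto (fun k => (B k).π i m) Filter.atTop (nhds (πlim i m)))
    (hβ : ∀ i ≤ n, ∀ m, TVTendsto (fun k => (B k).β i m) (βlim i m)) :
    ∃ φ : ℕ → ℕ, StrictMono φ ∧
    ∃ (ηn : Fin (h ^ n) → SPExp Ω) (πn1 : Fin (h ^ (n + 1)) → ℝ)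
      (βn1 : Fin (h ^ (n + 1)) → Belief Ω),
      (∀ m, ηn m ∈ F) ∧
      (∀ m, WeakTendsto (fun l => (B (φ l)).η n m) (ηn m)) ∧
      (∀ c, Filter.Tendsto (fun l => (B (φ l)).π (n + 1) c) Filter.atTop (nhds (πn1 c))) ∧
      (∀ c, 0 ≤ πn1 c) ∧ (∑ c, πn1 c = 1) ∧
      (∀ c, TVTendsto (fun l => (B (φ l)).β (n + 1) c) (βn1 c)) ∧
      (∀ m, SPExp.sigma (ηn m) = βlim n m) ∧
      (∀ m, ∀ p ∈ SPExp.tau (ηn m), ∃ j : Fin h, βn1 (treeChild m j) = p) ∧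
      (∀ (m : Fin (h ^ n)) (p : Belief Ω),
        (∑ j : Fin h, if βn1 (treeChild m j) = p then πn1 (treeChild m j) else 0)
          = πlim n m * (ηn m).w p) :=
  lem_step_converge_general F h hA1 μ n B πlim βlim hπ hβ
end

section
/- For an instance (μ, F, v) satisfying Assumptions 1 and 3, for every ε > 0 and the corresponding n_ε given in Assumption 3, it holds that v_{n_ε}(μ) ≥ v_∞(μ) − ε·(V̄ − V̲). -/
open Filter Topology
open scoped Classical

noncomputable section AuxRate

variable {Ω : Type*} [Fintype Ω] {F : Set (SPExp Ω)} {μ : Belief Ω}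

lemma SPExp.expect_const' (e : SPExp Ω) (c : ℝ) : e.expect (fun _ => c) = c := by
  simp [SPExp.expect, ← Finset.sum_mul, e.sum_one]

lemma SPExp.expect_mono' (e : SPExp Ω) {f g : Belief Ω → ℝ}
    (h : ∀ p ∈ e.w.support, f p ≤ g p) : e.expect f ≤ e.expect g :=
  Finset.sum_le_sum fun p hp => mul_le_mul_of_nonneg_left (h p hp) (e.nonneg p)

lemma SPExp.expect_add' (e : SPExp Ω) (f g : Belief Ω → ℝ) :
    e.expect (fun p => f p + g p) = e.expect f + e.expect g := by
  simp [SPExp.expect, mul_add, Finset.sum_add_distrib]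

lemma SPExp.expect_smul' (e : SPExp Ω) (c : ℝ) (f : Belief Ω → ℝ) :
    e.expect (fun p => c * f p) = c * e.expect f := by
  simp [SPExp.expect, Finset.mul_sum, mul_left_comm]

lemma SPExp.expect_triv' (p : Belief Ω) (f : Belief Ω → ℝ) :
    (SPExp.triv p).expect f = f p := by
  simp [SPExp.expect, SPExp.triv, Finsupp.support_single_ne_zero _ one_ne_zero]

lemma histExp_succ (S : SeqP F μ) (g : Hist Ω → ℝ) (n : ℕ) (ξ : Hist Ω) :
    histExp S g (n + 1) ξ =
      (S.next ξ).expect fun p => histExp S g n ((S.next ξ, p) :: ξ) := rfl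

lemma histExp_mono (S : SeqP F μ) {g1 g2 : Hist Ω → ℝ} :
    ∀ (n : ℕ) (ξ : Hist Ω), (∀ ξ', ξ'.length = ξ.length + n → g1 ξ' ≤ g2 ξ') →
      histExp S g1 n ξ ≤ histExp S g2 n ξ
  | 0, ξ, h => h ξ (by simp)
  | n + 1, ξ, h => SPExp.expect_mono' _ fun p _ =>
      histExp_mono S n _ fun ξ' hξ' => h ξ' (by simp at hξ' ⊢; omega)

lemma histExp_const (S : SeqP F μ) (c : ℝ) :
    ∀ (n : ℕ) (ξ : Hist Ω), histExp S (fun _ => c) n ξ = c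
  | 0, _ => rfl
  | n + 1, ξ => by
      rw [histExp_succ]
      simp only [histExp_const S c n]
      exact SPExp.expect_const' _ c

lemma histExp_add (S : SeqP F μ) (g1 g2 : Hist Ω → ℝ) :
    ∀ (n : ℕ) (ξ : Hist Ω),
      histExp S (fun ξ => g1 ξ + g2 ξ) n ξ = histExp S g1 n ξ + histExp S g2 n ξ
  | 0, _ => rfl
  | n + 1, ξ => by
      rw [histExp_succ, histExp_succ, histExp_succ, ← SPExp.expect_add']
      exact congrArg _ (funext fun p => histExp_add S g1 g2 n _)

lemma histExp_smul (S : SeqP F μ) (c : ℝ) (g : Hist Ω → ℝ) :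
    ∀ (n : ℕ) (ξ : Hist Ω),
      histExp S (fun ξ => c * g ξ) n ξ = c * histExp S g n ξ
  | 0, _ => rfl
  | n + 1, ξ => by
      rw [histExp_succ, histExp_succ, ← SPExp.expect_smul']
      exact congrArg _ (funext fun p => histExp_smul S c g n _)

lemma histExp_sub (S : SeqP F μ) (g1 g2 : Hist Ω → ℝ) (n : ℕ) (ξ : Hist Ω) :
    histExp S (fun ξ => g1 ξ - g2 ξ) n ξ = histExp S g1 n ξ - histExp S g2 n ξ := by
  have h := histExp_add S (fun ξ => g1 ξ - g2 ξ) g2 n ξ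
  have h2 : (fun ξ => (g1 ξ - g2 ξ) + g2 ξ) = g1 := funext fun ξ => by ring
  rw [h2] at h
  linarith

lemma histExp_comp (S : SeqP F μ) (g : Hist Ω → ℝ) (l : ℕ) :
    ∀ (n : ℕ) (ξ : Hist Ω),
      histExp S g (n + l) ξ = histExp S (fun ξ' => histExp S g l ξ') n ξ
  | 0, ξ => by simp [histExp]
  | n + 1, ξ => by
      have hn : n + 1 + l = (n + l) + 1 := by omega
      rw [hn, histExp_succ, histExp_succ]
      exact congrArg _ (funext fun p => histExp_comp S g l n _)

lemma padHist_zero (ξ : Hist Ω) : padHist μ ξ 0 = ξ := rfl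

lemma padHist_one (ξ : Hist Ω) :
    padHist μ ξ 1 = (SPExp.triv (lastBelief μ ξ), lastBelief μ ξ) :: ξ := rfl

lemma lastBelief_padHist (ξ : Hist Ω) (l : ℕ) :
    lastBelief μ (padHist μ ξ l) = lastBelief μ ξ := by
  cases l with
  | zero => rfl
  | succ l => simp [padHist, List.replicate_succ, lastBelief]

lemma padHist_padHist (ξ : Hist Ω) (l : ℕ) :
    padHist μ (padHist μ ξ 1) l = padHist μ ξ (l + 1) := by
  have h := lastBelief_padHist (μ := μ) ξ 1
  rw [padHist, h, padHist_one, padHist, List.replicate_succ']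
  simp

lemma length_padHist (ξ : Hist Ω) (l : ℕ) :
    (padHist μ ξ l).length = l + ξ.length := by simp [padHist]

lemma TerminatesAfter.pad {S : SeqP F μ} {ξ : Hist Ω} (hT : TerminatesAfter S ξ) :
    TerminatesAfter S (padHist μ ξ 1) := fun l => by
  rw [padHist_padHist, lastBelief_padHist]
  exact hT (l + 1)

lemma histExp_of_terminates (S : SeqP F μ) (g : Hist Ω → ℝ) :
    ∀ (l : ℕ) (ξ : Hist Ω), TerminatesAfter S ξ →
      histExp S g l ξ = g (padHist μ ξ l)
  | 0, ξ, hT => rfl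
  | l + 1, ξ, hT => by
      have h0 : S.next ξ = SPExp.triv (lastBelief μ ξ) := hT 0
      rw [histExp_succ, h0, SPExp.expect_triv', ← padHist_one,
        histExp_of_terminates S g l _ hT.pad, padHist_padHist]

lemma histExp_v_of_terminates (S : SeqP F μ) (v : Belief Ω → ℝ) {ξ : Hist Ω}
    (hT : TerminatesAfter S ξ) (l : ℕ) :
    histExp S (fun ξ' => v (lastBelief μ ξ')) l ξ = v (lastBelief μ ξ) := by
  rw [histExp_of_terminates S _ l ξ hT, lastBelief_padHist]

lemma IsNStep.terminatesAfter {S : SeqP F μ} {n : ℕ} (hS : IsNStep S n)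
    {ξ : Hist Ω} (hξ : n ≤ ξ.length) : TerminatesAfter S ξ := fun l => by
  rw [hS _ (by rw [length_padHist]; omega), lastBelief_padHist]

end AuxRate

/-- Corollary: convergence-rate bound v_{n_ε}(μ) ≥ v_∞(μ) − ε(V̄ − V̲) for (ε, n_ε)
as in Assumption 3. -/
theorem coro_rate {Ω : Type*} [Fintype Ω] [Nonempty Ω]
    (F : Set (SPExp Ω)) (hTF : Trivials Ω ⊆ F)
    (v : Belief Ω → ℝ) (Vlo Vhi : ℝ) (hVlo : 0 < Vlo) (hVV : Vlo ≤ Vhi)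
    (hvlo : ∀ p, Vlo ≤ v p) (hvhi : ∀ p, v p ≤ Vhi)
    (husc : UpperSemicontinuous v)
    (h : ℕ) (hA1 : Assumption1 F h) (μ : Belief Ω)
    (nk : ℕ → ℕ) (Sk : ℕ → SeqP F μ)
    (hstep : ∀ k, IsNStep (Sk k) (nk k))
    (hlim : Filter.Tendsto (fun k => stepUtility v (Sk k) (nk k)) Filter.atTop
      (nhds (vInf F v μ)))
    (ε : ℝ) (hε : 0 < ε) (N : ℕ)
    (hterm : ∀ k, N ≤ nk k → 1 - ε ≤ termProb (Sk k) N) :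
    vInf F v μ - ε * (Vhi - Vlo) ≤ vN F v N μ := by
  have hεV : 0 ≤ ε * (Vhi - Vlo) := mul_nonneg hε.le (by linarith)
  have hbdd : BddAbove (Set.range fun S : SeqP F μ => stepUtility v S N) := by
    refine ⟨Vhi, ?_⟩
    rintro x ⟨S, rfl⟩
    calc stepUtility v S N ≤ histExp S (fun _ => Vhi) N [] :=
          histExp_mono S N [] fun ξ' _ => hvhi _
      _ = Vhi := histExp_const S Vhi N []
  have key : ∀ k, stepUtility v (Sk k) (nk k) - ε * (Vhi - Vlo) ≤ vN F v N μ := by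
    intro k
    have hle : stepUtility v (Sk k) N ≤ vN F v N μ := le_ciSup hbdd (Sk k)
    rcases le_or_gt N (nk k) with hN | hN
    · obtain ⟨l, hl⟩ : ∃ l, nk k = N + l := ⟨nk k - N, by omega⟩
      set S := Sk k with hS
      have hT : 1 - ε ≤ termProb S N := hterm k (by omega)
      have hcomp : stepUtility v S (nk k) =
          histExp S (fun ξ => histExp S (fun ξ' => v (lastBelief μ ξ')) l ξ) N [] := by
        rw [hl]; exact histExp_comp S _ l N []
      have hstep2 : histExp S (fun ξ => histExp S (fun ξ' => v (lastBelief μ ξ')) l ξ) N []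
          ≤ histExp S (fun ξ => v (lastBelief μ ξ) +
              (Vhi - Vlo) * (1 - (if TerminatesAfter S ξ then (1 : ℝ) else 0))) N [] := by
        refine histExp_mono S N [] fun ξ _ => ?_
        by_cases hTξ : TerminatesAfter S ξ
        · rw [histExp_v_of_terminates S v hTξ l]
          simp [hTξ]
        · have h1 : histExp S (fun ξ' => v (lastBelief μ ξ')) l ξ ≤ Vhi :=
            le_trans (histExp_mono S l ξ fun ξ' _ => hvhi _) (histExp_const S Vhi l ξ).le
          have h2 : Vlo ≤ v (lastBelief μ ξ) := hvlo _
          simp only [hTξ, if_false]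
          linarith
      have hsplit : histExp S (fun ξ => v (lastBelief μ ξ) +
            (Vhi - Vlo) * (1 - (if TerminatesAfter S ξ then (1 : ℝ) else 0))) N []
          = stepUtility v S N + (Vhi - Vlo) * (1 - termProb S N) := by
        rw [histExp_add S _ _ N [], histExp_smul S _ _ N [],
          histExp_sub S (fun _ => (1 : ℝ)) _ N [], histExp_const S 1 N []]
        rfl
      have hfinal : (Vhi - Vlo) * (1 - termProb S N) ≤ (Vhi - Vlo) * ε :=
        mul_le_mul_of_nonneg_left (by linarith) (by linarith)
      have := hcomp ▸ (hstep2.trans_eq hsplit)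
      calc stepUtility v S (nk k) - ε * (Vhi - Vlo)
          ≤ stepUtility v S N := by rw [mul_comm] at hfinal ⊢; linarith
        _ ≤ vN F v N μ := hle
    · obtain ⟨l, hl⟩ : ∃ l, N = nk k + l := ⟨N - nk k, by omega⟩
      set S := Sk k with hSdef
      have heq : stepUtility v S N = stepUtility v S (nk k) := by
        rw [hl, show stepUtility v S (nk k + l) =
            histExp S (fun ξ => histExp S (fun ξ' => v (lastBelief μ ξ')) l ξ) (nk k) []
          from histExp_comp S _ l (nk k) []]
        refine le_antisymm (histExp_mono S (nk k) [] fun ξ' hξ' => ?_)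
          (histExp_mono S (nk k) [] fun ξ' hξ' => ?_) <;>
        · rw [histExp_v_of_terminates S v
            ((hstep k).terminatesAfter (by simp at hξ'; omega)) l]
      calc stepUtility v S (nk k) - ε * (Vhi - Vlo)
          ≤ stepUtility v S (nk k) := by linarith
        _ = stepUtility v S N := heq.symm
        _ ≤ vN F v N μ := hle
  exact le_of_tendsto' (hlim.sub_const _) key
end
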